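/- arXiv:2504.01936 — 2 statements merged into one kernel-verified Lean document; each statement's English description precedes it below -/
import Mathlib

section
/- Let ℓ be even and let s^{(ℓ)} be the (ℓ+1)×(ℓ+1) permutation matrix with s_{jk} = δ_{jk} if j is even and s_{jk} = δ_{ℓ−j, k} if j is odd. Then s^{(ℓ)} commutes with the Kravchuk matrix M^{(ℓ)}, and (s^{(ℓ)} M^{(ℓ)})_{jk} = (M^{(ℓ)} s^{(ℓ)})_{jk} = (−1)^{jk} M^{(ℓ)}_{jk}. -/
open Polynomial

/-- The Kravchuk matrix of order `ℓ`: entry `(j, k)` is the degree-`k` elementary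
symmetric polynomial evaluated at `j` copies of `-1` and `ℓ - j` copies of `1`. -/
def kravchukMatrix (ℓ : ℕ) : Matrix (Fin (ℓ + 1)) (Fin (ℓ + 1)) ℤ :=
  fun j k => Multiset.esymm (Multiset.replicate (j : ℕ) (-1 : ℤ) + Multiset.replicate (ℓ - (j : ℕ)) 1) (k : ℕ)

/-- The antipode involution matrix: fixes even-indexed rows, sends odd row `j` to `ℓ - j`. -/
def antipode (ℓ : ℕ) : Matrix (Fin (ℓ + 1)) (Fin (ℓ + 1)) ℤ :=
  fun j k => if (j : ℕ) % 2 = 0 then (if j = k then 1 else 0)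
             else (if ℓ - (j : ℕ) = (k : ℕ) then 1 else 0)

lemma krav_poly (ℓ j k : ℕ) (hj : j ≤ ℓ) (hk : k ≤ ℓ) :
    Multiset.esymm (Multiset.replicate j (-1:ℤ) + Multiset.replicate (ℓ - j) 1) k
      = ((X - 1 : ℤ[X]) ^ j * (X + 1) ^ (ℓ - j)).coeff (ℓ - k) := by
  set s : Multiset ℤ := Multiset.replicate j (-1:ℤ) + Multiset.replicate (ℓ - j) 1 with hs
  have hcard : Multiset.card s = ℓ := by
    simp [hs, Nat.add_sub_cancel' hj]
  have h1 : ℓ - k ≤ Multiset.card s := by omega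
  have h2 := Multiset.prod_X_add_C_coeff s h1
  have hmap : (s.map fun r => (X : ℤ[X]) + C r).prod
      = (X - 1 : ℤ[X]) ^ j * (X + 1) ^ (ℓ - j) := by
    simp [hs, Multiset.map_replicate, Multiset.prod_replicate, sub_eq_add_neg]
  rw [hmap, hcard] at h2
  rw [h2, Nat.sub_sub_self hk]

lemma row_flip (a b k : ℕ) :
    Multiset.esymm (Multiset.replicate b (-1:ℤ) + Multiset.replicate a 1) k
      = (-1) ^ k * Multiset.esymm (Multiset.replicate a (-1:ℤ) + Multiset.replicate b 1) k := by
  have h := Multiset.pow_smul_esymm (-1 : ℤ) k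
      (Multiset.replicate a (-1:ℤ) + Multiset.replicate b 1)
  have hmap : ((Multiset.replicate a (-1:ℤ) + Multiset.replicate b 1).map ((-1 : ℤ) • ·))
      = Multiset.replicate b (-1:ℤ) + Multiset.replicate a 1 := by
    simp [Multiset.map_replicate, add_comm]
  rw [hmap] at h
  rw [← h, smul_eq_mul]

lemma coeff_flip (ℓ j k : ℕ) (hj : j ≤ ℓ) (hk : k ≤ ℓ) :
    ((X - 1 : ℤ[X]) ^ j * (X + 1) ^ (ℓ - j)).coeff k
      = (-1) ^ j * ((X - 1 : ℤ[X]) ^ j * (X + 1) ^ (ℓ - j)).coeff (ℓ - k) := by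
  set p : ℤ[X] := (X - 1) ^ j * (X + 1) ^ (ℓ - j) with hp
  have hrefl_pow : ∀ (n : ℕ) (a : ℤ), reflect n (((X : ℤ[X]) + C a) ^ n) = (C a * X + 1) ^ n := by
    intro n a
    induction n with
    | zero => simp
    | succ n ih =>
      have h1 : ((X : ℤ[X]) + C a) ^ (n + 1) = ((X + C a) ^ n) * (X + C a) := by ring
      have hd1 : (((X : ℤ[X]) + C a) ^ n).natDegree ≤ n := by
        exact natDegree_pow_le.trans (by rw [natDegree_X_add_C, mul_one])
      have hd2 : ((X : ℤ[X]) + C a).natDegree ≤ 1 := le_of_eq (natDegree_X_add_C a)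
      rw [h1, reflect_mul _ _ hd1 hd2, ih]
      have : reflect 1 ((X : ℤ[X]) + C a) = C a * X + 1 := by
        rw [reflect_add]
        have hX : reflect 1 (X : ℤ[X]) = 1 := by
          have : (X : ℤ[X]) = X ^ 1 := (pow_one _).symm
          rw [this, reflect_monomial]
          simp
        rw [hX, reflect_C]
        ring
      rw [this]
      ring
  have hrefl : reflect ℓ p = C ((-1 : ℤ) ^ j) * p := by
    have hsplit : ℓ = j + (ℓ - j) := by omega
    have hd1 : ((X - 1 : ℤ[X]) ^ j).natDegree ≤ j := by
      have h1 : (X - 1 : ℤ[X]) = X + C (-1) := by simp [sub_eq_add_neg]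
      rw [h1]
      exact natDegree_pow_le.trans (by rw [natDegree_X_add_C, mul_one])
    have hd2 : (((X : ℤ[X]) + 1) ^ (ℓ - j)).natDegree ≤ ℓ - j := by
      have h1 : ((X : ℤ[X]) + 1) = X + C 1 := by simp
      rw [h1]
      exact natDegree_pow_le.trans (by rw [natDegree_X_add_C, mul_one])
    have hmul := reflect_mul ((X - 1 : ℤ[X]) ^ j) (((X : ℤ[X]) + 1) ^ (ℓ - j)) hd1 hd2
    rw [← hsplit] at hmul
    rw [hp, hmul]
    have e1 : reflect j ((X - 1 : ℤ[X]) ^ j) = C ((-1 : ℤ) ^ j) * (X - 1) ^ j := by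
      have h1 : (X - 1 : ℤ[X]) = X + C (-1) := by simp [sub_eq_add_neg]
      rw [h1, hrefl_pow j (-1)]
      have : (C (-1 : ℤ) * X + 1) = C (-1 : ℤ) * (X + C (-1)) := by
        simp [mul_add]
      rw [this, mul_pow, ← map_pow]
    have e2 : reflect (ℓ - j) (((X : ℤ[X]) + 1) ^ (ℓ - j)) = ((X : ℤ[X]) + 1) ^ (ℓ - j) := by
      have h1 : ((X : ℤ[X]) + 1) = X + C 1 := by simp
      rw [h1, hrefl_pow (ℓ - j) 1]
      simp [add_comm]
    rw [e1, e2]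
    ring
  have hc : p.coeff (ℓ - k) = (-1 : ℤ) ^ j * p.coeff k := by
    have := congrArg (fun q => Polynomial.coeff q k) hrefl
    simp only [coeff_reflect, coeff_C_mul] at this
    rwa [revAt_le hk] at this
  have hsq : ((-1 : ℤ) ^ j) * ((-1 : ℤ) ^ j) = 1 := by
    rcases Nat.even_or_odd j with h | h
    · simp [h.neg_one_pow]
    · simp [h.neg_one_pow]
  calc p.coeff k = (((-1:ℤ)^j) * ((-1:ℤ)^j)) * p.coeff k := by rw [hsq, one_mul]
    _ = (-1:ℤ)^j * p.coeff (ℓ - k) := by rw [mul_assoc, ← hc]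

lemma col_flip (ℓ j k : ℕ) (hj : j ≤ ℓ) (hk : k ≤ ℓ) :
    Multiset.esymm (Multiset.replicate j (-1:ℤ) + Multiset.replicate (ℓ - j) 1) (ℓ - k)
      = (-1) ^ j * Multiset.esymm (Multiset.replicate j (-1:ℤ) + Multiset.replicate (ℓ - j) 1) k := by
  rw [krav_poly ℓ j (ℓ - k) hj (by omega), krav_poly ℓ j k hj hk,
    Nat.sub_sub_self hk, coeff_flip ℓ j k hj hk]
theorem antipode_kravchuk_comm (ℓ : ℕ) (hℓ : Even ℓ) :
    antipode ℓ * kravchukMatrix ℓ = kravchukMatrix ℓ * antipode ℓ ∧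
    ∀ j k : Fin (ℓ + 1),
      (antipode ℓ * kravchukMatrix ℓ) j k = (-1 : ℤ) ^ ((j : ℕ) * (k : ℕ)) * kravchukMatrix ℓ j k ∧
      (kravchukMatrix ℓ * antipode ℓ) j k = (-1 : ℤ) ^ ((j : ℕ) * (k : ℕ)) * kravchukMatrix ℓ j k := by
  obtain ⟨t, ht⟩ := hℓ
  have hL : ℓ = 2 * t := by omega
  have hleft : ∀ j k : Fin (ℓ + 1),
      (antipode ℓ * kravchukMatrix ℓ) j k
        = (-1 : ℤ) ^ ((j : ℕ) * (k : ℕ)) * kravchukMatrix ℓ j k := by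
    intro j k
    have hj : (j : ℕ) ≤ ℓ := by omega
    rw [Matrix.mul_apply]
    by_cases hje : (j : ℕ) % 2 = 0
    · have hsgn : (-1 : ℤ) ^ ((j : ℕ) * (k : ℕ)) = 1 := by
        apply Even.neg_one_pow
        exact (Nat.even_iff.2 hje).mul_right _
      rw [hsgn, one_mul]
      simp only [antipode, hje, if_true, ite_mul, one_mul, zero_mul]
      rw [Finset.sum_ite_eq]
      simp
    · set j' : Fin (ℓ + 1) := ⟨ℓ - (j : ℕ), by omega⟩ with hj'
      have hcond : ∀ m : Fin (ℓ + 1),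
          (antipode ℓ j m) = if j' = m then (1 : ℤ) else 0 := by
        intro m
        simp only [antipode, hje, if_false, hj', Fin.ext_iff]
      simp only [hcond, ite_mul, one_mul, zero_mul]
      rw [Finset.sum_ite_eq]
      simp only [Finset.mem_univ, if_true]
      have hMj' : kravchukMatrix ℓ j' k
          = (-1 : ℤ) ^ (k : ℕ) * kravchukMatrix ℓ j k := by
        show Multiset.esymm (Multiset.replicate (ℓ - (j:ℕ)) (-1:ℤ)
            + Multiset.replicate (ℓ - (ℓ - (j:ℕ))) 1) (k:ℕ) = _
        rw [Nat.sub_sub_self hj]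
        exact row_flip (j : ℕ) (ℓ - (j : ℕ)) (k : ℕ)
      rw [hMj']
      have hsgn : (-1 : ℤ) ^ ((j : ℕ) * (k : ℕ)) = (-1) ^ (k : ℕ) := by
        rw [pow_mul, Odd.neg_one_pow (Nat.odd_iff.2 (by omega))]
      rw [hsgn]
  have hright : ∀ j k : Fin (ℓ + 1),
      (kravchukMatrix ℓ * antipode ℓ) j k
        = (-1 : ℤ) ^ ((j : ℕ) * (k : ℕ)) * kravchukMatrix ℓ j k := by
    intro j k
    have hj : (j : ℕ) ≤ ℓ := by omega
    have hk : (k : ℕ) ≤ ℓ := by omega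
    rw [Matrix.mul_apply]
    by_cases hke : (k : ℕ) % 2 = 0
    · have hsgn : (-1 : ℤ) ^ ((j : ℕ) * (k : ℕ)) = 1 := by
        apply Even.neg_one_pow
        exact (Nat.even_iff.2 hke).mul_left _
      rw [hsgn, one_mul]
      have hcond : ∀ m : Fin (ℓ + 1),
          (antipode ℓ m k) = if m = k then (1 : ℤ) else 0 := by
        intro m
        have hm : (m : ℕ) ≤ ℓ := by omega
        simp only [antipode]
        by_cases hme : (m : ℕ) % 2 = 0
        · simp [hme]
        · rw [if_neg hme]
          have h1 : ¬ (ℓ - (m : ℕ) = (k : ℕ)) := by omega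
          have h2 : ¬ (m = k) := by
            rw [Fin.ext_iff]; omega
          simp [h1, h2]
      simp only [hcond, mul_ite, mul_one, mul_zero]
      rw [Finset.sum_ite_eq']
      simp
    · set k' : Fin (ℓ + 1) := ⟨ℓ - (k : ℕ), by omega⟩ with hk'
      have hcond : ∀ m : Fin (ℓ + 1),
          (antipode ℓ m k) = if m = k' then (1 : ℤ) else 0 := by
        intro m
        have hm : (m : ℕ) ≤ ℓ := by omega
        simp only [antipode]
        by_cases hme : (m : ℕ) % 2 = 0
        · rw [if_pos hme]
          have h1 : ¬ (m = k) := by rw [Fin.ext_iff]; omega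
          have h2 : ¬ (m = k') := by rw [Fin.ext_iff]; simp only [hk']; omega
          simp [h1, h2]
        · rw [if_neg hme]
          have h1 : (ℓ - (m : ℕ) = (k : ℕ)) ↔ (m = k') := by
            rw [Fin.ext_iff]; simp only [hk']; omega
          simp only [h1]
      simp only [hcond, mul_ite, mul_one, mul_zero]
      rw [Finset.sum_ite_eq']
      simp only [Finset.mem_univ, if_true]
      have hMk' : kravchukMatrix ℓ j k'
          = (-1 : ℤ) ^ (j : ℕ) * kravchukMatrix ℓ j k := by
        show Multiset.esymm (Multiset.replicate (j:ℕ) (-1:ℤ)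
            + Multiset.replicate (ℓ - (j:ℕ)) 1) (ℓ - (k:ℕ)) = _
        exact col_flip ℓ (j : ℕ) (k : ℕ) hj hk
      rw [hMk']
      have hsgn : (-1 : ℤ) ^ ((j : ℕ) * (k : ℕ)) = (-1) ^ (j : ℕ) := by
        rw [Nat.mul_comm, pow_mul, Odd.neg_one_pow (Nat.odd_iff.2 (by omega))]
      rw [hsgn]
  exact ⟨Matrix.ext fun j k => (hleft j k).trans (hright j k).symm,
    fun j k => ⟨hleft j k, hright j k⟩⟩
end

section
/- Let E be the channel E(X) = Σ_{k=0}^{2n} C(2n,k)^{−1} q_k Σ_{|α|=k} γ_α X γ_α†, where (q_k) is a probability distribution. Then each Majorana monomial γ_β is an eigenvector of E with eigenvalue ξ_{|β|}, where ξ_j = Σ_{k=0}^{2n} (−1)^{jk} e_k(−1,…,−1,1,…,1) C(2n,k)^{−1} q_k (with j copies of −1 and 2n−j copies of +1 in the argument of e_k). -/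
open Finset

/-- The Majorana monomial `γ_α`: the product of the `γ μ` for `μ ∈ α` in ascending order. -/
def majoranaMonomial {n : ℕ} {A : Type*} [Ring A] (γ : Fin n → A) (α : Finset (Fin n)) : A :=
  ((α.sort (· ≤ ·)).map γ).prod

/-! Conjugating `γ_β` by one generator `γ_μ` gives the sign `(-1)^(|β| + [μ ∈ β])`: `γ_μ`
anticommutes past every factor of `γ_β` except itself and squares to `1`. Conjugating by the
factors of `γ_α` one at a time then gives `(-1)^(|α||β| + |α ∩ β|)`, so `γ_β` is an eigenvector
of every twirl term. Summed over `|α| = k`, the signs `(-1)^|α ∩ β|` add up to `e_k` of the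
numbers `(-1)^[μ ∈ β]`, i.e. of `|β|` copies of `-1` and `2n - |β|` copies of `1`. -/

theorem esymm_replicate_neg_one_add_replicate_one {ι R : Type*} [Fintype ι] [DecidableEq ι]
    [CommRing R] (β : Finset ι) (k : ℕ) :
    (Multiset.replicate #β (-1 : R) + Multiset.replicate (Fintype.card ι - #β) 1).esymm k
      = ∑ α ∈ powersetCard k univ, (-1 : R) ^ #(α ∩ β) := by
  have hsigns : Multiset.replicate #β (-1 : R) + Multiset.replicate (Fintype.card ι - #β) 1
      = univ.val.map fun μ => if μ ∈ β then -1 else 1 := by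
    rw [← card_compl, ← card_val, ← card_val, ← Multiset.map_const', ← Multiset.map_const',
      ← union_compl β, ← disjUnion_eq_union _ _ disjoint_compl_right, disjUnion_val,
      Multiset.map_add]
    congr 1 <;> exact Multiset.map_congr rfl fun μ hμ => by simp_all
  rw [hsigns, esymm_map_val]
  refine sum_congr rfl fun α _ => ?_
  rw [prod_ite_mem, prod_const]

theorem sum_map_sort_eq_sum {κ M : Type*} [LinearOrder κ] [AddCommMonoid M] (s : Finset κ)
    (f : κ → M) :
    ((s.sort (· ≤ ·)).map f).sum = ∑ μ ∈ s, f μ := by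
  rw [← Multiset.sum_coe, ← Multiset.map_coe, sort_eq]
  rfl

section ListConjugation

variable {ι A : Type*} (R : Type*) [Ring A] [CommRing R] [Algebra R A] {γ : ι → A}

theorem mul_list_prod_map_mul_eq_neg_one_pow_smul [DecidableEq ι]
    (hsq : ∀ μ, γ μ * γ μ = 1) (hanti : ∀ μ ν, μ ≠ ν → γ μ * γ ν = -(γ ν * γ μ))
    (μ : ι) (l : List ι) :
    γ μ * (l.map γ).prod * γ μ = (-1 : R) ^ (l.length + l.count μ) • (l.map γ).prod := by
  induction l with
  | nil => simp [hsq]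
  | cons ν t ih =>
    have hswap : γ μ * γ ν = (-1 : R) ^ (1 + if ν = μ then 1 else 0) • (γ ν * γ μ) := by
      by_cases h : ν = μ
      · simp [h]
      · simp [h, hanti μ ν (Ne.symm h)]
    calc γ μ * ((ν :: t).map γ).prod * γ μ = (γ μ * γ ν) * ((t.map γ).prod * γ μ) := by
          simp only [List.map_cons, List.prod_cons, mul_assoc]
      _ = (-1 : R) ^ (1 + if ν = μ then 1 else 0) • (γ ν * (γ μ * (t.map γ).prod * γ μ)) := by
          rw [hswap, smul_mul_assoc]
          simp only [mul_assoc]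
      _ = _ := by
        rw [ih, mul_smul_comm, smul_smul, ← pow_add, List.length_cons, List.count_cons,
          List.map_cons, List.prod_cons]
        congr 2
        simp only [beq_iff_eq]
        ring

theorem list_prod_map_mul_mul_star_eq_neg_one_pow_smul [StarMul A]
    (hsa : ∀ μ, star (γ μ) = γ μ) {X : A} (e : ι → ℕ)
    (hX : ∀ μ, γ μ * X * γ μ = (-1 : R) ^ e μ • X) (l : List ι) :
    (l.map γ).prod * X * star (l.map γ).prod = (-1 : R) ^ (l.map e).sum • X := by
  induction l with
  | nil => simp
  | cons μ t ih =>
    calc ((μ :: t).map γ).prod * X * star ((μ :: t).map γ).prod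
        = γ μ * ((t.map γ).prod * X * star (t.map γ).prod) * γ μ := by
          simp only [List.map_cons, List.prod_cons, star_mul, hsa, mul_assoc]
      _ = _ := by
        rw [ih, mul_smul_comm, smul_mul_assoc, hX, smul_smul, ← pow_add, List.map_cons,
          List.sum_cons, add_comm]

end ListConjugation

section MajoranaConjugation

variable {A : Type*} (R : Type*) [Ring A] [CommRing R] [Algebra R A] {m : ℕ} {γ : Fin m → A}

theorem generator_mul_majoranaMonomial_mul_generator
    (hsq : ∀ μ, γ μ * γ μ = 1) (hanti : ∀ μ ν, μ ≠ ν → γ μ * γ ν = -(γ ν * γ μ))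
    (μ : Fin m) (β : Finset (Fin m)) :
    γ μ * majoranaMonomial γ β * γ μ
      = (-1 : R) ^ (#β + if μ ∈ β then 1 else 0) • majoranaMonomial γ β := by
  rw [majoranaMonomial, mul_list_prod_map_mul_eq_neg_one_pow_smul R hsq hanti, length_sort,
    ← Multiset.coe_count, sort_eq, Multiset.count_eq_of_nodup β.nodup]
  rfl

theorem majoranaMonomial_mul_mul_star [StarMul A] (hsa : ∀ μ, star (γ μ) = γ μ)
    (hsq : ∀ μ, γ μ * γ μ = 1) (hanti : ∀ μ ν, μ ≠ ν → γ μ * γ ν = -(γ ν * γ μ))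
    (α β : Finset (Fin m)) :
    majoranaMonomial γ α * majoranaMonomial γ β * star (majoranaMonomial γ α)
      = (-1 : R) ^ (#α * #β + #(α ∩ β)) • majoranaMonomial γ β := by
  refine (list_prod_map_mul_mul_star_eq_neg_one_pow_smul R hsa _
    (fun μ => generator_mul_majoranaMonomial_mul_generator R hsq hanti μ β)
    (α.sort (· ≤ ·))).trans ?_
  rw [sum_map_sort_eq_sum, sum_add_distrib, sum_ite_mem, sum_const, sum_const, smul_eq_mul,
    smul_eq_mul, mul_one]

theorem sum_powersetCard_majoranaMonomial_mul_mul_star [StarMul A]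
    (hsa : ∀ μ, star (γ μ) = γ μ) (hsq : ∀ μ, γ μ * γ μ = 1)
    (hanti : ∀ μ ν, μ ≠ ν → γ μ * γ ν = -(γ ν * γ μ)) (β : Finset (Fin m)) (k : ℕ) :
    ∑ α ∈ powersetCard k univ,
        majoranaMonomial γ α * majoranaMonomial γ β * star (majoranaMonomial γ α)
      = ((-1 : R) ^ (#β * k) *
          (Multiset.replicate #β (-1 : R) + Multiset.replicate (m - #β) 1).esymm k) •
        majoranaMonomial γ β := by
  have hesymm := esymm_replicate_neg_one_add_replicate_one (R := R) β k
  rw [Fintype.card_fin] at hesymm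
  rw [hesymm, mul_sum, sum_smul]
  refine sum_congr rfl fun α hα => ?_
  rw [majoranaMonomial_mul_mul_star R hsa hsq hanti, mem_powersetCard_univ.1 hα, pow_add,
    mul_comm k]

end MajoranaConjugation

theorem flo_twirled_channel_eigenvalues_general {n : ℕ} {A : Type*} [Ring A] [StarRing A] [Algebra ℝ A]
    (γ : Fin (2 * n) → A)
    (hCAR : ∀ μ ν, γ μ * γ ν + γ ν * γ μ = if μ = ν then (2 : A) else 0)
    (hsa : ∀ μ, star (γ μ) = γ μ)
    (q : ℕ → ℝ)
    (E : A → A)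
    (hE : ∀ X, E X = ∑ k ∈ Finset.range (2 * n + 1),
        (((Nat.choose (2 * n) k : ℝ))⁻¹ * q k) •
          ∑ α ∈ univ.filter (fun α : Finset (Fin (2 * n)) => α.card = k),
            majoranaMonomial γ α * X * star (majoranaMonomial γ α))
    (β : Finset (Fin (2 * n))) :
    E (majoranaMonomial γ β)
      = (∑ k ∈ Finset.range (2 * n + 1),
          (-1 : ℝ) ^ (β.card * k) *
            Multiset.esymm
              (Multiset.replicate β.card (-1 : ℝ) + Multiset.replicate (2 * n - β.card) 1) k *
            ((Nat.choose (2 * n) k : ℝ))⁻¹ * q k) • majoranaMonomial γ β := by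
  have hsq : ∀ μ, γ μ * γ μ = 1 := fun μ => by
    have h2 : (2 : ℝ) • (γ μ * γ μ) = (2 : ℝ) • 1 := by
      rw [two_smul, two_smul, one_add_one_eq_two, hCAR, if_pos rfl]
    exact smul_right_injective A two_ne_zero h2
  have hanti : ∀ μ ν, μ ≠ ν → γ μ * γ ν = -(γ ν * γ μ) := fun μ ν h =>
    eq_neg_of_add_eq_zero_left ((hCAR μ ν).trans (if_neg h))
  rw [hE, sum_smul]
  refine sum_congr rfl fun k _ => ?_
  rw [← powerset_univ, ← powersetCard_eq_filter,
    sum_powersetCard_majoranaMonomial_mul_mul_star ℝ hsa hsq hanti, smul_smul]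
  congr 1
  ring

theorem flo_twirled_channel_eigenvalues {n : ℕ} {A : Type*} [Ring A] [StarRing A] [Algebra ℝ A]
    (γ : Fin (2 * n) → A)
    (hCAR : ∀ μ ν, γ μ * γ ν + γ ν * γ μ = if μ = ν then (2 : A) else 0)
    (hsa : ∀ μ, star (γ μ) = γ μ)
    (q : ℕ → ℝ) (hq : ∀ k, 0 ≤ q k) (hqsum : ∑ k ∈ Finset.range (2 * n + 1), q k = 1)
    (E : A → A)
    (hE : ∀ X, E X = ∑ k ∈ Finset.range (2 * n + 1),
        (((Nat.choose (2 * n) k : ℝ))⁻¹ * q k) •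
          ∑ α ∈ univ.filter (fun α : Finset (Fin (2 * n)) => α.card = k),
            majoranaMonomial γ α * X * star (majoranaMonomial γ α))
    (β : Finset (Fin (2 * n))) :
    E (majoranaMonomial γ β)
      = (∑ k ∈ Finset.range (2 * n + 1),
          (-1 : ℝ) ^ (β.card * k) *
            Multiset.esymm
              (Multiset.replicate β.card (-1 : ℝ) + Multiset.replicate (2 * n - β.card) 1) k *
            ((Nat.choose (2 * n) k : ℝ))⁻¹ * q k) • majoranaMonomial γ β :=
  flo_twirled_channel_eigenvalues_general γ hCAR hsa q E hE β
end
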